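/- Let Q = T[H_1, …, H_t] be a strong semicomplete composition. Then there is an arc between every 3-king of Q and every non-king of Q; moreover, for every non-king u of Q there exists a 3-king v of Q such that d_Q(u, v) > 3 and v dominates u (i.e., the arc vu is in Q). -/

import Mathlib

universe u v

/-- There is a directed walk of length at most `n` from `x` to `y`. -/
def ReachIn {V : Type u} (A : V → V → Prop) : ℕ → V → V → Prop
  | 0 => fun x y => x = y
  | n + 1 => fun x y => x = y ∨ ∃ z, A x z ∧ ReachIn A n z y

/-- A digraph is strong if every vertex can reach every other vertex. -/
def IsStrong {V : Type u} (A : V → V → Prop) : Prop :=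
  ∀ x y : V, Relation.ReflTransGen A x y

/-- A digraph is loopless if it has no loops. -/
def Loopless {V : Type u} (A : V → V → Prop) : Prop := ∀ x, ¬ A x x

/-- A digraph is semicomplete if there is at least one arc between any two distinct vertices. -/
def Semicomplete {V : Type u} (A : V → V → Prop) : Prop :=
  ∀ x y : V, x ≠ y → A x y ∨ A y x

/-- The subdigraph induced on a set `s` of vertices. -/
def Restrict {V : Type u} (A : V → V → Prop) (s : Set V) :
    {v // v ∈ s} → {v // v ∈ s} → Prop := fun x y => A x.1 y.1

/-- `S` is a separator: deleting `S` leaves a non-strong digraph. -/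
def IsSeparator {V : Type u} (A : V → V → Prop) (S : Set V) : Prop :=
  ¬ IsStrong (Restrict A Sᶜ)

/-- A digraph is `k`-strong-connected if every separator has at least `k` vertices. -/
def KStrong {V : Type u} (A : V → V → Prop) (k : ℕ) : Prop :=
  ∀ S : Set V, IsSeparator A S → k ≤ S.ncard

/-- The composition `T[H₁, …, H_t]`. -/
def Comp {t : ℕ} (T : Fin t → Fin t → Prop) (V : Fin t → Type u)
    (H : ∀ i, V i → V i → Prop) : (Σ i, V i) → (Σ i, V i) → Prop :=
  fun p q => T p.1 q.1 ∨ ∃ h : p.1 = q.1, H q.1 (h ▸ p.2) q.2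

/-- The complement of the underlying (simple) graph of a digraph. -/
def complUnderlying {V : Type u} (A : V → V → Prop) : SimpleGraph V where
  Adj x y := x ≠ y ∧ ¬ A x y ∧ ¬ A y x
  symm := ⟨fun x y ⟨h1, h2, h3⟩ => ⟨h1.symm, h3, h2⟩⟩
  loopless := ⟨fun x h => h.1 rfl⟩

/-- `x` is a `k`-king: it reaches every vertex by a path of length at most `k`. -/
def IsKKing {V : Type u} (A : V → V → Prop) (k : ℕ) (x : V) : Prop :=
  ∀ y, ReachIn A k x y

/-- A (directed) path given as a list of vertices. -/
def IsPathList {V : Type u} (A : V → V → Prop) (l : List V) : Prop :=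
  l.Nodup ∧ l.Chain' A

/-- A (directed) cycle given as a list of distinct vertices. -/
def IsCycleList {V : Type u} (A : V → V → Prop) (l : List V) : Prop :=
  2 ≤ l.length ∧ l.Nodup ∧ l.Chain' A ∧
    ∀ x ∈ l.getLast?, ∀ y ∈ l.head?, A x y

/-!
Two vertices of the same part reach each other in at most three steps: strongness forces every
part `i` to have an out-neighbour `j` and an in-neighbour `j'` with `j = j'` or `j → j'`.
A walk can leave a part only through an arc of `T`, and every vertex of the part has that arc
too; hence a vertex in the part of a 3-king is a 3-king, and a 3-king and a non-king lie in
different parts of the semicomplete `T`, so they are adjacent.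

If `u` is a non-king, every `v` with `d(u, v) > 3` lies outside the part of `u` and dominates every
`w` with `d(u, w) ≤ 2`, as otherwise `d(u, v) ≤ 3`. Taking `v` in a part of maximum out-degree
among the parts containing such vertices (a 2-king of them in `T`), `v` reaches the vertices near
`u` through those `w` and the remaining ones through the 2-king property.
-/

namespace ReachIn

variable {W : Type*} {A : W → W → Prop}

theorem refl (A : W → W → Prop) : ∀ (n : ℕ) (x : W), ReachIn A n x x
  | 0, _ => rfl
  | _ + 1, _ => Or.inl rfl

theorem cons {n : ℕ} {x z y : W} (hxz : A x z) (hzy : ReachIn A n z y) :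
    ReachIn A (n + 1) x y :=
  Or.inr ⟨z, hxz, hzy⟩

theorem succ_of : ∀ {n : ℕ} {x y : W}, ReachIn A n x y → ReachIn A (n + 1) x y
  | 0, _, _, h => Or.inl h
  | _ + 1, _, _, Or.inl h => Or.inl h
  | _ + 1, _, _, Or.inr ⟨_, hxz, hzy⟩ => cons hxz (succ_of hzy)

theorem mono {m n : ℕ} (hmn : m ≤ n) {x y : W} (h : ReachIn A m x y) : ReachIn A n x y := by
  induction n, hmn using Nat.le_induction with
  | base => exact h
  | succ _ _ ih => exact ih.succ_of

theorem snoc : ∀ {n : ℕ} {x z y : W}, ReachIn A n x z → A z y → ReachIn A (n + 1) x y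
  | 0, _, _, _, rfl, hzy => cons hzy rfl
  | _ + 1, _, _, _, Or.inl rfl, hzy => cons hzy (refl A _ _)
  | _ + 1, _, _, _, Or.inr ⟨_, hxw, hwz⟩, hzy => cons hxw (snoc hwz hzy)

theorem cases_tail : ∀ {n : ℕ} {x y : W}, ReachIn A (n + 1) x y →
    ReachIn A n x y ∨ ∃ z, ReachIn A n x z ∧ A z y
  | 0, _, _, Or.inl rfl => Or.inl rfl
  | 0, x, _, Or.inr ⟨_, hxz, rfl⟩ => Or.inr ⟨x, rfl, hxz⟩
  | _ + 1, _, _, Or.inl rfl => Or.inl (refl A _ _)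
  | _ + 1, _, _, Or.inr ⟨_, hxz, hzy⟩ =>
    match cases_tail hzy with
    | Or.inl h => Or.inl (cons hxz h)
    | Or.inr ⟨w, hzw, hwy⟩ => Or.inr ⟨w, cons hxz hzw, hwy⟩

end ReachIn

section Digraph

open Finset

variable {W : Type*} {A : W → W → Prop}

theorem IsStrong.exists_arc_out (hA : IsStrong A) {S : Set W} {x y : W} (hx : x ∈ S)
    (hy : y ∉ S) : ∃ a ∈ S, ∃ b ∉ S, A a b := by
  by_contra! hclosed
  have hmem : ∀ z, Relation.ReflTransGen A x z → z ∈ S := fun z hz => by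
    induction hz with
    | refl => exact hx
    | tail _ hab ih => exact by_contra fun hc => hclosed _ ih _ hc hab
  exact hy (hmem y (hA x y))

theorem IsStrong.exists_short_cycle (hA : IsStrong A) (hsc : Semicomplete A) {i i' : W}
    (hi' : i' ≠ i) : ∃ j j', A i j ∧ A j' i ∧ (j = j' ∨ A j j') := by
  obtain ⟨_, hi, b, hb, hib⟩ := hA.exists_arc_out (S := {i}) rfl hi'
  obtain ⟨a, ⟨-, hia⟩, c, hc, hac⟩ := hA.exists_arc_out (S := {k | k ≠ i ∧ A i k})
    ⟨hb, Set.mem_singleton_iff.mp hi ▸ hib⟩ (y := i) fun h => h.1 rfl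
  by_cases hci : c = i
  · subst hci
    exact ⟨a, a, hia, hac, Or.inl rfl⟩
  · have hci' : A c i := (hsc i c (Ne.symm hci)).resolve_left fun h => hc ⟨hci, h⟩
    exact ⟨a, c, hia, hci', Or.inr hac⟩

/-- A vertex of maximum out-degree is a 2-king of a semicomplete digraph. -/
theorem Semicomplete.exists_reachIn_two (hsc : Semicomplete A) {P : Finset W}
    (hP : P.Nonempty) : ∃ i ∈ P, ∀ j ∈ P, ReachIn A 2 i j := by
  classical
  obtain ⟨i, hiP, hmax⟩ := P.exists_max_image (fun k => #{m ∈ P | m ≠ k ∧ A k m}) hP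
  refine ⟨i, hiP, fun j hjP => by_contra fun hij2 => ?_⟩
  have hij : i ≠ j := fun e => hij2 (e ▸ ReachIn.refl A 2 i)
  have hnij : ¬ A i j := fun h => hij2 (.cons h (.refl A 1 j))
  have hji : A j i := (hsc i j hij).resolve_left hnij
  have hsub : insert i {m ∈ P | m ≠ i ∧ A i m} ⊆ {m ∈ P | m ≠ j ∧ A j m} := by
    intro m hm
    simp only [Finset.mem_insert, Finset.mem_filter] at hm ⊢
    rcases hm with rfl | ⟨hmP, hmi, him⟩
    · exact ⟨hiP, hij, hji⟩
    · have hmj : m ≠ j := fun e => hnij (e ▸ him)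
      exact ⟨hmP, hmj,
        (hsc m j hmj).resolve_left fun h => hij2 (.cons him (.cons h (.refl A 0 j)))⟩
  have hcard := Finset.card_le_card hsub
  rw [Finset.card_insert_of_notMem (by simp)] at hcard
  have := hmax j hjP
  omega

end Digraph

namespace Comp

variable {t : ℕ} {V : Fin t → Type u} {T : Fin t → Fin t → Prop}
  {H : ∀ i, V i → V i → Prop}

theorem fst_of_fst_ne {p q : Σ i, V i} (h : Comp T V H p q) (hne : p.1 ≠ q.1) : T p.1 q.1 :=
  h.resolve_right fun ⟨he, _⟩ => hne he

theorem isStrong_of_isStrong [∀ i, Nonempty (V i)] (h : IsStrong (Comp T V H)) : IsStrong T :=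
  fun i j => (h ⟨i, Classical.arbitrary _⟩ ⟨j, Classical.arbitrary _⟩).lift' Sigma.fst
    fun p q hpq => hpq.elim .single fun ⟨he, _⟩ =>
      show Relation.ReflTransGen T p.1 q.1 from he ▸ .refl

theorem reachIn_of_reachIn_fst [∀ i, Nonempty (V i)] {n : ℕ} {p q : Σ i, V i}
    (h : ReachIn T n p.1 q.1) (hne : p.1 ≠ q.1) : ReachIn (Comp T V H) n p q := by
  induction n generalizing p with
  | zero => exact absurd h hne
  | succ n ih =>
    obtain h | ⟨k, hpk, hkq⟩ := h
    · exact absurd h hne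
    by_cases hk : k = q.1
    · exact .cons (Or.inl (hk ▸ hpk)) (.refl _ n q)
    · exact .cons (z := ⟨k, Classical.arbitrary _⟩) (Or.inl hpk) (ih hkq hk)

theorem reachIn_three_of_fst_eq [∀ i, Nonempty (V i)] (ht : 2 ≤ t) (hsc : Semicomplete T)
    (hstrong : IsStrong (Comp T V H)) {a b : Σ i, V i} (hab : a.1 = b.1) :
    ReachIn (Comp T V H) 3 a b := by
  have : Nontrivial (Fin t) := Fin.nontrivial_iff_two_le.mpr ht
  obtain ⟨i', hi'⟩ := exists_ne a.1
  obtain ⟨j, j', hj, hj', hjj'⟩ := (isStrong_of_isStrong hstrong).exists_short_cycle hsc hi'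
  let vx (k : Fin t) : Σ i, V i := ⟨k, Classical.arbitrary _⟩
  have hj'b : Comp T V H (vx j') b := Or.inl (hab ▸ hj')
  rcases hjj' with rfl | hjj'
  · exact ReachIn.mono (by norm_num) (.cons (z := vx j) (Or.inl hj) (.cons hj'b (.refl _ 0 b)))
  · exact .cons (z := vx j) (Or.inl hj)
      (.cons (z := vx j') (Or.inl hjj') (.cons hj'b (.refl _ 0 b)))

theorem reachIn_of_fst_eq_source {n : ℕ} {a u y : Σ i, V i}
    (h : ReachIn (Comp T V H) n a y) (hau : a.1 = u.1) (hy : y.1 ≠ u.1) :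
    ReachIn (Comp T V H) n u y := by
  induction n generalizing a with
  | zero => exact absurd (hau ▸ congrArg Sigma.fst h.symm) hy
  | succ n ih =>
    obtain rfl | ⟨z, haz, hzy⟩ := h
    · exact absurd hau hy
    by_cases hz : z.1 = u.1
    · exact (ih hzy hz).succ_of
    · exact .cons (Or.inl (hau ▸ fst_of_fst_ne haz (hau ▸ Ne.symm hz))) hzy

theorem reachIn_of_fst_eq_target {n : ℕ} {u w v : Σ i, V i}
    (h : ReachIn (Comp T V H) n u w) (hwv : w.1 = v.1) (hu : u.1 ≠ v.1) :
    ReachIn (Comp T V H) n u v := by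
  induction n generalizing u with
  | zero => exact absurd (hwv ▸ congrArg Sigma.fst h) hu
  | succ n ih =>
    obtain rfl | ⟨z, huz, hzw⟩ := h
    · exact absurd hwv hu
    by_cases hz : z.1 = v.1
    · exact .cons (Or.inl (hz ▸ fst_of_fst_ne huz (hz ▸ hu))) (.refl _ n v)
    · exact .cons huz (ih hzw hz)

theorem isKKing_of_fst_eq [∀ i, Nonempty (V i)] (ht : 2 ≤ t) (hsc : Semicomplete T)
    (hstrong : IsStrong (Comp T V H)) {x u : Σ i, V i} (hx : IsKKing (Comp T V H) 3 x)
    (hxu : x.1 = u.1) : IsKKing (Comp T V H) 3 u := fun y =>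
  if hy : y.1 = u.1 then reachIn_three_of_fst_eq ht hsc hstrong hy.symm
  else reachIn_of_fst_eq_source (hx y) hxu hy

theorem adj_of_isKKing_of_not_isKKing [∀ i, Nonempty (V i)] (ht : 2 ≤ t)
    (hsc : Semicomplete T) (hstrong : IsStrong (Comp T V H)) {x u : Σ i, V i}
    (hx : IsKKing (Comp T V H) 3 x) (hu : ¬ IsKKing (Comp T V H) 3 u) :
    Comp T V H x u ∨ Comp T V H u x := by
  by_cases hxu : x.1 = u.1
  · exact absurd (isKKing_of_fst_eq ht hsc hstrong hx hxu) hu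
  · exact (hsc _ _ hxu).imp Or.inl Or.inl

theorem dominates_of_not_reachIn [∀ i, Nonempty (V i)] (ht : 2 ≤ t) (hsc : Semicomplete T)
    (hstrong : IsStrong (Comp T V H)) {u v w : Σ i, V i}
    (hv : ¬ ReachIn (Comp T V H) 3 u v) (hw : ReachIn (Comp T V H) 2 u w) :
    Comp T V H v w := by
  have huv : u.1 ≠ v.1 := fun e => hv (reachIn_three_of_fst_eq ht hsc hstrong e)
  have hvw : v.1 ≠ w.1 := fun e => hv (reachIn_of_fst_eq_target hw e.symm huv).succ_of
  exact Or.inl ((hsc _ _ hvw).resolve_right fun h => hv (hw.snoc (Or.inl h)))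

theorem exists_isKKing_dominating [∀ i, Nonempty (V i)] (ht : 2 ≤ t) (hsc : Semicomplete T)
    (hstrong : IsStrong (Comp T V H)) {u : Σ i, V i} (hu : ¬ IsKKing (Comp T V H) 3 u) :
    ∃ v, IsKKing (Comp T V H) 3 v ∧ ¬ ReachIn (Comp T V H) 3 u v ∧ Comp T V H v u := by
  classical
  obtain ⟨y₀, hy₀⟩ : ∃ y, ¬ ReachIn (Comp T V H) 3 u y := not_forall.mp hu
  let P : Finset (Fin t) := {j | ∃ x : V j, ¬ ReachIn (Comp T V H) 3 u ⟨j, x⟩}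
  have hmemP : ∀ {y : Σ i, V i}, ¬ ReachIn (Comp T V H) 3 u y → y.1 ∈ P := fun hy => by
    simp only [P, Finset.mem_filter, Finset.mem_univ, true_and]
    exact ⟨_, hy⟩
  obtain ⟨i, hiP, hking⟩ := hsc.exists_reachIn_two ⟨_, hmemP hy₀⟩
  obtain ⟨x, hx⟩ : ∃ x : V i, ¬ ReachIn (Comp T V H) 3 u ⟨i, x⟩ := by simpa [P] using hiP
  have hdom := fun {w} => dominates_of_not_reachIn (w := w) ht hsc hstrong hx
  refine ⟨⟨i, x⟩, fun y => ?_, hx, hdom (.refl _ 2 u)⟩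
  by_cases hy : ReachIn (Comp T V H) 3 u y
  · rcases hy.cases_tail with hy2 | ⟨w, hw, hwy⟩
    · exact .cons (hdom hy2) (.refl _ 2 y)
    · exact .cons (hdom hw) (.cons hwy (.refl _ 1 y))
  · by_cases hiy : i = y.1
    · exact reachIn_three_of_fst_eq ht hsc hstrong hiy
    · exact (reachIn_of_reachIn_fst (hking _ (hmemP hy)) hiy).mono (by norm_num)

end Comp

theorem stmt7_general {t : ℕ} (ht : 2 ≤ t) (V : Fin t → Type u)
    [∀ i, Nonempty (V i)] (T : Fin t → Fin t → Prop) (H : ∀ i, V i → V i → Prop)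
    (hsc : Semicomplete T)
    (hstrong : IsStrong (Comp T V H)) :
    (∀ x : Σ i, V i, IsKKing (Comp T V H) 3 x → ∀ u, ¬ IsKKing (Comp T V H) 3 u →
      Comp T V H x u ∨ Comp T V H u x) ∧
    (∀ u : Σ i, V i, ¬ IsKKing (Comp T V H) 3 u →
      ∃ v, IsKKing (Comp T V H) 3 v ∧ ¬ ReachIn (Comp T V H) 3 u v ∧ Comp T V H v u) :=
  ⟨fun _ hx _ hu => Comp.adj_of_isKKing_of_not_isKKing ht hsc hstrong hx hu,
    fun _ hu => Comp.exists_isKKing_dominating ht hsc hstrong hu⟩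

/-- In a strong semicomplete composition there is an arc between every 3-king
and every non-king; moreover, for every non-king `u` there is a 3-king `v` with
`d(u,v) > 3` which dominates `u`. -/
theorem stmt7 {t : ℕ} (ht : 2 ≤ t) (V : Fin t → Type u) [∀ i, Fintype (V i)]
    [∀ i, Nonempty (V i)] (T : Fin t → Fin t → Prop) (H : ∀ i, V i → V i → Prop)
    (hTl : Loopless T) (hHl : ∀ i, Loopless (H i)) (hsc : Semicomplete T)
    (hstrong : IsStrong (Comp T V H)) :
    (∀ x : Σ i, V i, IsKKing (Comp T V H) 3 x → ∀ u, ¬ IsKKing (Comp T V H) 3 u →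
      Comp T V H x u ∨ Comp T V H u x) ∧
    (∀ u : Σ i, V i, ¬ IsKKing (Comp T V H) 3 u →
      ∃ v, IsKKing (Comp T V H) 3 v ∧ ¬ ReachIn (Comp T V H) 3 u v ∧ Comp T V H v u) :=
  stmt7_general ht V T H hsc hstrong
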